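/- For every s ≥ 1 and every η ∈ (0,1/4), ∫₀^∞ e^{-θ} min(e^{2θ - 2πs(1-2η)/θ}, 1) dθ ≤ ((πs)^{1/2} + 1) e^{-(πs(1-2η))^{1/2}}. -/

import Mathlib

open Real Set MeasureTheory

/-!
Write `c = πs(1-2η)` and `T = √c`. On `(0, T]` the first term of the minimum bounds the
integrand by `exp (θ - 2c/θ) ≤ exp (-T)`, so that piece contributes at most `T exp (-T)`; on
`(T, ∞)` the second term bounds it by `exp (-θ)`, whose integral is `exp (-T)`. Finally
`T ≤ √(πs)` because `1 - 2η ≤ 1`.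
-/

lemma sub_two_mul_sq_div_le_neg {θ T : ℝ} (hθ : 0 < θ) (hθT : θ ≤ T) :
    θ - 2 * T ^ 2 / θ ≤ -T := by
  rw [sub_le_iff_le_add, ← sub_le_iff_le_add', le_div_iff₀ hθ]
  nlinarith

lemma setIntegral_Ioi_zero_le_of_le_exp_neg {f : ℝ → ℝ} {T : ℝ} (hT : 0 ≤ T)
    (hf : AEStronglyMeasurable f (volume.restrict (Ioi 0)))
    (hf_exp : ∀ θ ∈ Ioi (0 : ℝ), ‖f θ‖ ≤ exp (-θ))
    (hf_T : ∀ θ ∈ Ioc 0 T, f θ ≤ exp (-T)) :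
    ∫ θ in Ioi 0, f θ ≤ (T + 1) * exp (-T) := by
  have hexp : IntegrableOn (fun θ : ℝ => exp (-θ)) (Ioi 0) := by
    simpa using exp_neg_integrableOn_Ioi 0 one_pos
  have hf_int : IntegrableOn f (Ioi 0) :=
    hexp.mono' hf ((ae_restrict_iff' measurableSet_Ioi).2 (.of_forall hf_exp))
  have h_small : ∫ θ in Ioc 0 T, f θ ≤ T * exp (-T) := by
    calc ∫ θ in Ioc 0 T, f θ ≤ ∫ _ in Ioc 0 T, exp (-T) :=
          setIntegral_mono_on (hf_int.mono_set Ioc_subset_Ioi_self)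
            (integrableOn_const measure_Ioc_lt_top.ne) measurableSet_Ioc hf_T
      _ = T * exp (-T) := by
          rw [setIntegral_const, volume_real_Ioc_of_le hT, smul_eq_mul, sub_zero]
  have h_large : ∫ θ in Ioi T, f θ ≤ exp (-T) := by
    calc ∫ θ in Ioi T, f θ ≤ ∫ θ in Ioi T, exp (-θ) :=
          setIntegral_mono_on (hf_int.mono_set (Ioi_subset_Ioi hT))
            (hexp.mono_set (Ioi_subset_Ioi hT)) measurableSet_Ioi
            fun θ hθ => (le_abs_self _).trans (hf_exp θ (hT.trans_lt hθ))
      _ = exp (-T) := integral_exp_neg_Ioi T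
  rw [← Ioc_union_Ioi_eq_Ioi hT, setIntegral_union (Ioc_disjoint_Ioi le_rfl) measurableSet_Ioi
    (hf_int.mono_set Ioc_subset_Ioi_self) (hf_int.mono_set (Ioi_subset_Ioi hT))]
  linarith

lemma exp_neg_mul_min_exp_le_exp_neg_sqrt {c θ : ℝ} (hc : 0 ≤ c) (hθ : θ ∈ Ioc 0 (√c)) :
    exp (-θ) * min (exp (2 * θ - 2 * c / θ)) 1 ≤ exp (-√c) := by
  calc exp (-θ) * min (exp (2 * θ - 2 * c / θ)) 1
      ≤ exp (-θ) * exp (2 * θ - 2 * c / θ) := by gcongr; exact min_le_left _ _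
    _ = exp (θ - 2 * √c ^ 2 / θ) := by rw [← exp_add, sq_sqrt hc]; ring_nf
    _ ≤ exp (-√c) := exp_le_exp.2 (sub_two_mul_sq_div_le_neg hθ.1 hθ.2)

lemma integral_exp_neg_mul_min_exp_le {c : ℝ} (hc : 0 ≤ c) :
    ∫ θ in Ioi 0, exp (-θ) * min (exp (2 * θ - 2 * c / θ)) 1 ≤ (√c + 1) * exp (-√c) := by
  refine setIntegral_Ioi_zero_le_of_le_exp_neg (sqrt_nonneg c) (by fun_prop)
    (fun θ _ => ?_) (fun θ hθ => exp_neg_mul_min_exp_le_exp_neg_sqrt hc hθ)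
  rw [norm_mul, norm_of_nonneg (exp_nonneg _),
    norm_of_nonneg (le_min (exp_nonneg _) zero_le_one)]
  exact mul_le_of_le_one_right (exp_nonneg _) (min_le_right _ _)

/-- For `s ≥ 1` and `η ∈ (0,1/4)`,
`∫₀^∞ e^{-θ} min(e^{2θ - 2πs(1-2η)/θ}, 1) dθ ≤ ((πs)^{1/2} + 1) e^{-(πs(1-2η))^{1/2}}`. -/
theorem integral_exp_min_bound (s η : ℝ) (hs : 1 ≤ s) (hη : η ∈ Set.Ioo (0 : ℝ) (1 / 4)) :
    (∫ θ in Set.Ioi (0 : ℝ),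
        Real.exp (-θ) * min (Real.exp (2 * θ - 2 * π * s * (1 - 2 * η) / θ)) 1)
      ≤ (Real.sqrt (π * s) + 1) * Real.exp (-Real.sqrt (π * s * (1 - 2 * η))) := by
  obtain ⟨hη0, hη4⟩ := hη
  have hπs : 0 ≤ π * s := mul_nonneg pi_pos.le (by linarith)
  have hc : 0 ≤ π * s * (1 - 2 * η) := mul_nonneg hπs (by linarith)
  have h := integral_exp_neg_mul_min_exp_le hc
  simp only [← mul_assoc] at h
  have h_sqrt : √(π * s * (1 - 2 * η)) ≤ √(π * s) :=
    sqrt_le_sqrt (mul_le_of_le_one_right hπs (by linarith))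
  refine h.trans ?_
  gcongr
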